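/- Many-to-one formula: Assume condition A2. Then for every s ∈ I_μ⁺ ∪ I_μ⁻, every x ∈ ℙ(V), every n ≥ 1 and every bounded measurable function h : (ℙ(V) × ℝ)^n → ℝ, one has 𝔼[ Σ_{|u|=n} h(X^x_{u|1}, S^x_{u|1}, …, X^x_u, S^x_u) ] = r_s(x) 𝔪(s)^n 𝔼_{Q_s^x}[ r_s(X_n)^{-1} e^{−s S_n} h(X_1, S_1, …, X_n, S_n) ], where X^x_u = G_u·x and S^x_u = σ(G_u, x). -/

import Mathlib

/-!
Formalization framework for "The extremal position of a branching random walk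
in the general linear group" (Grama, Mentemeier, Xiao).

`V = ℝ^d` (Euclidean), `𝔾 = GL(V)` is modelled by the units of the continuous
linear endomorphisms of `V`, and `ℙ(V)` by the projectivization of `V`.
-/

open MeasureTheory Filter Topology ProbabilityTheory Set
open scoped ENNReal NNReal Classical

noncomputable section

namespace BRWGL

abbrev V (d : ℕ) : Type := EuclideanSpace ℝ (Fin d)
abbrev GLV (d : ℕ) : Type := (V d →L[ℝ] V d)ˣ
abbrev PV (d : ℕ) : Type := Projectivization ℝ (V d)

variable {d : ℕ}

instance : TopologicalSpace (PV d) :=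
  inferInstanceAs (TopologicalSpace (Quotient (projectivizationSetoid ℝ (V d))))
instance : MeasurableSpace (PV d) := borel _
instance : BorelSpace (PV d) := ⟨rfl⟩
instance : MeasurableSpace (GLV d) := borel _
instance : BorelSpace (GLV d) := ⟨rfl⟩

/-- operator norm `‖g‖`. -/
def nrm (g : GLV d) : ℝ := ‖(g : V d →L[ℝ] V d)‖

/-- operator norm `‖g⁻¹‖`. -/
def nrmInv (g : GLV d) : ℝ := ‖((g⁻¹ : GLV d) : V d →L[ℝ] V d)‖

/-- determinant `det g`. -/
def detv (g : GLV d) : ℝ := ContinuousLinearMap.det (g : V d →L[ℝ] V d)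

/-- determinant `det (g⁻¹)`. -/
def detInv (g : GLV d) : ℝ := detv (g⁻¹)

lemma unit_injective (g : GLV d) :
    Function.Injective fun v : V d => (g : V d →L[ℝ] V d) v := by
  intro a b hab
  have h : ∀ v : V d, ((g⁻¹ : GLV d) : V d →L[ℝ] V d) ((g : V d →L[ℝ] V d) v) = v := by
    intro v
    have h1 : (((g⁻¹ : GLV d) : V d →L[ℝ] V d) * ((g : GLV d) : V d →L[ℝ] V d)) v = v := by
      have : ((g⁻¹ : GLV d) : V d →L[ℝ] V d) * ((g : GLV d) : V d →L[ℝ] V d) = 1 := by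
        rw [← Units.val_mul, inv_mul_cancel, Units.val_one]
      rw [this, ContinuousLinearMap.one_apply]
    rw [ContinuousLinearMap.mul_apply] at h1
    exact h1
  have h2 := congrArg (fun w => ((g⁻¹ : GLV d) : V d →L[ℝ] V d) w) hab
  simpa [h] using h2

/-- the projective action `g · x` of `𝔾` on `ℙ(V)`. -/
def gact (g : GLV d) (x : PV d) : PV d :=
  Projectivization.map ((g : V d →L[ℝ] V d) : V d →ₗ[ℝ] V d)
    (by simpa using unit_injective g) x

/-- the norm cocycle `σ(g, x) = log (‖g v‖ / ‖v‖)` for `x = ℝ v`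
(this does not depend on the chosen representative `v` of `x`). -/
def cocycle (g : GLV d) (x : PV d) : ℝ :=
  Real.log (‖(g : V d →L[ℝ] V d) x.rep‖ / ‖x.rep‖)

/-- the spectral radius `ρ(g)`, via the Gelfand formula `ρ(g) = inf_n ‖gⁿ‖^{1/n}`. -/
def specRad (g : GLV d) : ℝ :=
  ⨅ n : ℕ, ‖((g : V d →L[ℝ] V d)) ^ (n + 1)‖ ^ ((1 : ℝ) / (n + 1))

/-! ## Branching random walk on `GL(V)` -/

/-- A branching random walk on `GL(V)`, encoded in Ulam–Harris fashion: each node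
`u : List ℕ` of the infinite tree carries an offspring number `Noff u`, each potential
child `u ++ [i]` carries a mark `mark (u ++ [i])` in `GL(V)`, and the data
(offspring number, marks of the children) attached to the different nodes are i.i.d.
(this encodes reproduction according to i.i.d. copies of a point process `𝒩` on `𝔾`). -/
structure BRW (d : ℕ) (Ω : Type*) [MeasurableSpace Ω] where
  PP : Measure Ω
  prob : IsProbabilityMeasure PP
  Noff : List ℕ → Ω → ℕ
  mark : List ℕ → Ω → GLV d
  measN : ∀ u, Measurable (Noff u)
  measMark : ∀ u, Measurable (mark u)
  indep : iIndepFun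
    (fun u : List ℕ => fun ω => (Noff u ω, fun i : ℕ => mark (u ++ [i]) ω)) PP
  ident : ∀ u v : List ℕ,
    IdentDistrib (fun ω => (Noff u ω, fun i : ℕ => mark (u ++ [i]) ω))
      (fun ω => (Noff v ω, fun i : ℕ => mark (v ++ [i]) ω)) PP PP

namespace BRW

variable {Ω : Type*} [MeasurableSpace Ω] (b : BRW d Ω)

/-- a node `u` of the Ulam–Harris tree belongs to the Galton–Watson tree `𝕋` at time `ω`. -/
def alive (u : List ℕ) (ω : Ω) : Prop :=
  ∀ k : Fin u.length, u.get k < b.Noff (u.take k) ω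

/-- the branching random walk `G_u = g_u g_{u|n-1} ⋯ g_{u|1}`. -/
def Gu (u : List ℕ) (ω : Ω) : GLV d :=
  (((List.range u.length).map fun k => b.mark (u.take (k + 1)) ω).reverse).prod

/-- the event `𝒮` of ultimate survival of the system. -/
def survival : Set Ω := {ω | ∀ n : ℕ, ∃ u : List ℕ, u.length = n ∧ b.alive u ω}

/-- `𝔼 N`, the expected number of first-generation particles. -/
def EN : ℝ := ∫ ω, (b.Noff [] ω : ℝ) ∂b.PP

/-- Condition A1: `1 < 𝔼 N` and `𝔼 (N^{1+δ}) < ∞` for some `δ > 0`. -/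
structure CondA1 : Prop where
  int : Integrable (fun ω => (b.Noff [] ω : ℝ)) b.PP
  mean_gt : 1 < b.EN
  mom : ∃ δ > (0 : ℝ), Integrable (fun ω => (b.Noff [] ω : ℝ) ^ ((1 : ℝ) + δ)) b.PP

/-- `μ(B) = (𝔼N)⁻¹ 𝔼[Σ_{|u|=1} 1_B(G_u)]`:  `μ` is the normalized intensity measure of
the first-generation point process. -/
def IsBRWLaw (μ : Measure (GLV d)) : Prop :=
  ∀ B : Set (GLV d), MeasurableSet B →
    μ B * ENNReal.ofReal b.EN =
      ∫⁻ ω, ∑ i ∈ Finset.range (b.Noff [] ω),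
        B.indicator (fun _ => (1 : ℝ≥0∞)) (b.mark [i] ω) ∂b.PP

/-- the directed maximal position
`M_n^x(A) = sup {σ(G_u, x) : |u| = n, G_u · x ∈ A}`, an `EReal` (`sup ∅ = -∞`). -/
def MnA (x : PV d) (A : Set (PV d)) (n : ℕ) (ω : Ω) : EReal :=
  sSup ((fun u : List ℕ => (cocycle (b.Gu u ω) x : EReal)) ''
    {u | u.length = n ∧ b.alive u ω ∧ gact (b.Gu u ω) x ∈ A})

/-- the directed minimal position
`m_n^x(A) = inf {σ(G_u, x) : |u| = n, G_u · x ∈ A}`, an `EReal` (`inf ∅ = +∞`). -/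
def mnA (x : PV d) (A : Set (PV d)) (n : ℕ) (ω : Ω) : EReal :=
  sInf ((fun u : List ℕ => (cocycle (b.Gu u ω) x : EReal)) ''
    {u | u.length = n ∧ b.alive u ω ∧ gact (b.Gu u ω) x ∈ A})

/-- the directed maximal position of `log F(G_u)` for a functional `F` on `𝔾`. -/
def MnF (F : GLV d → ℝ) (x : PV d) (A : Set (PV d)) (n : ℕ) (ω : Ω) : EReal :=
  sSup ((fun u : List ℕ => (Real.log (F (b.Gu u ω)) : EReal)) ''
    {u | u.length = n ∧ b.alive u ω ∧ gact (b.Gu u ω) x ∈ A})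

/-- the directed minimal position of `log F(G_u)` for a functional `F` on `𝔾`. -/
def mnF (F : GLV d → ℝ) (x : PV d) (A : Set (PV d)) (n : ℕ) (ω : Ω) : EReal :=
  sInf ((fun u : List ℕ => (Real.log (F (b.Gu u ω)) : EReal)) ''
    {u | u.length = n ∧ b.alive u ω ∧ gact (b.Gu u ω) x ∈ A})

/-- `Y_s = Σ_{|u|=1} ‖G_u‖^s`. -/
def Ys (s : ℝ) (ω : Ω) : ℝ :=
  ∑ i ∈ Finset.range (b.Noff [] ω), nrm (b.mark [i] ω) ^ s

end BRW

/-! ## the intervals `I_μ⁺`, `I_μ⁻` and condition A2 -/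

/-- `I_μ⁺ = {s ≥ 0 : ∫ ‖g‖^s (1 + ‖g‖^d |det g⁻¹|) dμ < ∞}`. -/
def Iplus (d : ℕ) (μ : Measure (GLV d)) : Set ℝ :=
  {s | 0 ≤ s ∧ Integrable (fun g => nrm g ^ s * (1 + nrm g ^ d * |detInv g|)) μ}

/-- `I_μ⁻ = {s ≤ 0 : ∫ ‖g⁻¹‖^{-s} (1 + ‖g‖^d |det g⁻¹|) dμ < ∞}`. -/
def Iminus (d : ℕ) (μ : Measure (GLV d)) : Set ℝ :=
  {s | s ≤ 0 ∧ Integrable (fun g => nrmInv g ^ (-s) * (1 + nrm g ^ d * |detInv g|)) μ}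

/-- Condition A2: `μ` has a density with respect to the Haar measure on `𝔾`,
`inf_x μ{g : σ(g,x) > c₀} > 0` for some `c₀ > 0`, and the moment bound
`∫ max(‖g‖,‖g⁻¹‖)^{η₀} (1 + ‖g‖^d |det g⁻¹|) dμ < ∞` holds for some `η₀ > 0`. -/
structure CondA2 (d : ℕ) (μ : Measure (GLV d)) : Prop where
  isProb : IsProbabilityMeasure μ
  density : ∃ η : Measure (GLV d), η.IsHaarMeasure ∧ μ.AbsolutelyContinuous η
  lower : ∃ c₀ > (0 : ℝ), 0 < ⨅ x : PV d, μ {g | c₀ < cocycle g x}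
  moment : ∃ η₀ > (0 : ℝ), Integrable (fun g : GLV d =>
    max (nrm g) (nrmInv g) ^ η₀ * (1 + nrm g ^ d * |detInv g|)) μ

/-- The spectral data of the transfer operators
`P_s φ(x) = ∫ e^{s σ(g,x)} φ(g·x) μ(dg)`: for every `s ∈ I_μ⁺ ∪ I_μ⁻`,
the dominant eigenvalue `κ(s) > 0`, the strictly positive continuous eigenfunction `r_s`
(`P_s r_s = κ(s) r_s`) and the eigenprobability `ν_s` (`ν_s P_s = κ(s) ν_s`);
`ν = ν 0`. -/
structure EigenSystem (d : ℕ) (μ : Measure (GLV d)) where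
  κ : ℝ → ℝ
  r : ℝ → PV d → ℝ
  ν : ℝ → Measure (PV d)
  κ_pos : ∀ s ∈ Iplus d μ ∪ Iminus d μ, 0 < κ s
  r_pos : ∀ s ∈ Iplus d μ ∪ Iminus d μ, ∀ x, 0 < r s x
  r_cont : ∀ s ∈ Iplus d μ ∪ Iminus d μ, Continuous (r s)
  eig : ∀ s ∈ Iplus d μ ∪ Iminus d μ, ∀ x : PV d,
    ∫ g, Real.exp (s * cocycle g x) * r s (gact g x) ∂μ = κ s * r s x
  ν_prob : ∀ s ∈ Iplus d μ ∪ Iminus d μ, IsProbabilityMeasure (ν s)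
  ν_eig : ∀ s ∈ Iplus d μ ∪ Iminus d μ, ∀ φ : PV d → ℝ, Continuous φ →
    ∫ x, (∫ g, Real.exp (s * cocycle g x) * φ (gact g x) ∂μ) ∂(ν s) =
      κ s * ∫ x, φ x ∂(ν s)

/-! ## the Markov walk and the changed measures -/

/-- `G_n = g_n ⋯ g_1` where `g_k = ω (k - 1)`. -/
def prodPath (ω : ℕ → GLV d) : ℕ → GLV d
  | 0 => 1
  | n + 1 => ω n * prodPath ω n

/-- the Markov chain `X_n = G_n · x` (with `X_0 = x`). -/
def Xc (x : PV d) (ω : ℕ → GLV d) (n : ℕ) : PV d := gact (prodPath ω n) x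

/-- the Markov walk `S_n = Σ_{k=1}^n σ(g_k, X_{k-1})` (with `S_0 = 0`). -/
def Sc (x : PV d) (ω : ℕ → GLV d) : ℕ → ℝ
  | 0 => 0
  | n + 1 => Sc x ω n + cocycle (ω n) (Xc x ω n)

/-- the event `{τ_y > n} = {y - S_k ≥ 0 for all 1 ≤ k ≤ n}`,
where `τ_y = inf {k ≥ 1 : y - S_k < 0}`. -/
def stayEvent (x : PV d) (y : ℝ) (n : ℕ) : Set (ℕ → GLV d) :=
  {ω | ∀ k, 1 ≤ k → k ≤ n → 0 ≤ y - Sc x ω k}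

/-- `G_n = g_{n-1} ⋯ g_0` for a finite tuple of group elements. -/
def prodTup {n : ℕ} (gs : Fin n → GLV d) : GLV d := ((List.ofFn gs).reverse).prod

/-- The changed measure `Q_s^x` on `𝔾^ℕ`, characterized by its finite dimensional
marginals `κ(s)^{-n} e^{s σ(G_n,x)} (r_s(G_n·x)/r_s(x)) μ(dg_1)⋯μ(dg_n)`. -/
structure ChangedMeasure (d : ℕ) (μ : Measure (GLV d)) (es : EigenSystem d μ) (s : ℝ) where
  Q : PV d → Measure (ℕ → GLV d)
  prob : ∀ x, IsProbabilityMeasure (Q x)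
  marg : ∀ (x : PV d) (n : ℕ),
    Measure.map (fun ω (i : Fin n) => ω i) (Q x) =
      (Measure.pi fun _ : Fin n => μ).withDensity fun gs =>
        ENNReal.ofReal ((es.κ s ^ n)⁻¹ * Real.exp (s * cocycle (prodTup gs) x) *
          (es.r s (gact (prodTup gs) x) / es.r s x))

/-- the invariant probability measure `π_s` of the Markov chain `(X_n)` under the
changed measure `Q_s`. -/
structure InvMeasure (d : ℕ) {μ : Measure (GLV d)} {es : EigenSystem d μ} {s : ℝ}
    (cm : ChangedMeasure d μ es s) where
  π : Measure (PV d)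
  prob : IsProbabilityMeasure π
  inv : ∀ B : Set (PV d), MeasurableSet B →
    ∫⁻ x, Measure.map (fun ω => Xc x ω 1) (cm.Q x) B ∂π = π B

/-- `m` is the uniform (i.e. rotation invariant) probability measure on `ℙ(V)`. -/
def IsUniformP (d : ℕ) (m : Measure (PV d)) : Prop :=
  IsProbabilityMeasure m ∧
    ∀ g : GLV d, (∀ v : V d, ‖(g : V d →L[ℝ] V d) v‖ = ‖v‖) →
      Measure.map (gact g) m = m

/-- Condition A3: the invariant measure `ν = ν_0` has a strictly positive density with
respect to the uniform probability measure on `ℙ(V)`. -/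
structure CondA3 (d : ℕ) {μ : Measure (GLV d)} (es : EigenSystem d μ) where
  m : Measure (PV d)
  unif : IsUniformP d m
  dens : PV d → ℝ
  dens_pos : ∀ x, 0 < dens x
  dens_meas : Measurable dens
  eq : es.ν 0 = m.withDensity fun x => ENNReal.ofReal (dens x)

/-- a strictly positive density `π̇_s` of `π_s` with respect to the uniform
probability measure on `ℙ(V)`. -/
structure PiDensity (d : ℕ) (π : Measure (PV d)) where
  m : Measure (PV d)
  unif : IsUniformP d m
  dens : PV d → ℝ
  dens_pos : ∀ x, 0 < dens x
  dens_meas : Measurable dens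
  eq : π = m.withDensity fun x => ENNReal.ofReal (dens x)

/-- The dual changed measure `Q_s^{x,*}` on `𝔾^ℕ`, characterized by its finite
dimensional marginals
`κ(s)^{-n} e^{-(s+d)σ(G_n,x)} (r_s(x)/r_s(G_n·x)) (π̇_s(G_n·x)/π̇_s(x)) |det G_n| μ̌(dg_1)⋯μ̌(dg_n)`,
where `μ̌` is the image of `μ` under `g ↦ g⁻¹`. -/
structure DualMeasure (d : ℕ) (μ : Measure (GLV d)) (es : EigenSystem d μ) (s : ℝ)
    (πdens : PV d → ℝ) where
  Q : PV d → Measure (ℕ → GLV d)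
  prob : ∀ x, IsProbabilityMeasure (Q x)
  marg : ∀ (x : PV d) (n : ℕ),
    Measure.map (fun ω (i : Fin n) => ω i) (Q x) =
      (Measure.pi fun _ : Fin n => Measure.map (fun g : GLV d => g⁻¹) μ).withDensity fun gs =>
        ENNReal.ofReal ((es.κ s ^ n)⁻¹ *
          Real.exp (-(s + d) * cocycle (prodTup gs) x) *
          (es.r s x / es.r s (gact (prodTup gs) x)) *
          (πdens (gact (prodTup gs) x) / πdens x) * |detv (prodTup gs)|)

/-- `σ_s = sqrt (Λ''(s))` with `Λ = log κ`. -/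
def sigS {d : ℕ} {μ : Measure (GLV d)} (es : EigenSystem d μ) (s : ℝ) : ℝ :=
  Real.sqrt (iteratedDeriv 2 (fun t => Real.log (es.κ t)) s)

/-- `𝔼_{Q_s^x}[h(X_n, y - S_n); τ_y > n]`. -/
def condExpec {d : ℕ} {μ : Measure (GLV d)} {es : EigenSystem d μ} {s : ℝ}
    (cm : ChangedMeasure d μ es s) (h : PV d × ℝ → ℝ) (x : PV d) (y : ℝ) (n : ℕ) : ℝ :=
  ∫ ω in stayEvent x y n, h (Xc x ω n, y - Sc x ω n) ∂cm.Q x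

/-- harmonic function data: `V_s(x,y) = lim_n 𝔼_{Q_s^x}[(y - S_n); τ_y > n]`. -/
structure HarmonicFn (d : ℕ) {μ : Measure (GLV d)} {es : EigenSystem d μ} {s : ℝ}
    (cm : ChangedMeasure d μ es s) where
  Vs : PV d → ℝ → ℝ
  tendsto : ∀ (x : PV d) (y : ℝ), 0 ≤ y →
    Tendsto (fun n => ∫ ω in stayEvent x y n, (y - Sc x ω n) ∂cm.Q x) atTop (nhds (Vs x y))

/-- the martingale `M_n = Σ_{k=1}^n σ₀(g_k, X_{k-1})` associated with a solution `θ`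
of the cohomological equation, where `σ₀(g,x) = σ(g,x) - θ(x) + θ(g·x)`. -/
def Mart {d : ℕ} (θ : PV d → ℝ) (x : PV d) (ω : ℕ → GLV d) (n : ℕ) : ℝ :=
  ∑ k ∈ Finset.range n,
    (cocycle (ω k) (Xc x ω k) - θ (Xc x ω k) + θ (gact (ω k) (Xc x ω k)))

/-! ## the class `ℋ` of target functions -/

/-- membership in the class `ℋ`. -/
structure MemH (d : ℕ) (h : PV d × ℝ → ℝ) : Prop where
  cont : ∀ t : ℝ, Continuous fun x => h (x, t)
  meas : ∀ x : PV d, Measurable fun t => h (x, t)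
  bdd : ∀ t : ℝ, BddAbove (range fun x : PV d => |h (x, t)|)
  int : Integrable (fun t : ℝ => ⨆ x : PV d, |h (x, t)|)

/-- `‖h‖_ℋ = ∫_ℝ sup_x |h(x,t)| dt`. -/
def normH (d : ℕ) (h : PV d × ℝ → ℝ) : ℝ := ∫ t : ℝ, ⨆ x : PV d, |h (x, t)|

/-- `‖h‖_{π ⊗ Leb} = ∫∫ |h(x,t)| π(dx) dt`. -/
def normPiLeb (d : ℕ) (π : Measure (PV d)) (h : PV d × ℝ → ℝ) : ℝ :=
  ∫ x, (∫ t : ℝ, |h (x, t)|) ∂π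

/-- `h ≤_ε h'`: `h(x,t) ≤ h'(x, t + v)` for all `x`, `t` and `|v| ≤ ε`. -/
def LeEps (d : ℕ) (ε : ℝ) (h h' : PV d × ℝ → ℝ) : Prop :=
  ∀ (x : PV d) (t v : ℝ), |v| ≤ ε → h (x, t) ≤ h' (x, t + v)

/-- `h' ≤_ε h` in the lower sense: `h'(x, t + v) ≤ h(x,t)` for all `x`, `t`, `|v| ≤ ε`. -/
def LeEpsLower (d : ℕ) (ε : ℝ) (h' h : PV d × ℝ → ℝ) : Prop :=
  ∀ (x : PV d) (t v : ℝ), |v| ≤ ε → h' (x, t + v) ≤ h (x, t)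

/-- the standard normal density `φ`. -/
def gaussD (u : ℝ) : ℝ := (Real.sqrt (2 * Real.pi))⁻¹ * Real.exp (-u ^ 2 / 2)

/-- the Rayleigh density `φ⁺(t) = t e^{-t²/2} 1_{t ≥ 0}`. -/
def rayleighD (t : ℝ) : ℝ := if 0 ≤ t then t * Real.exp (-t ^ 2 / 2) else 0

/-- the Rayleigh distribution function `Φ⁺(t) = (1 - e^{-t²/2}) 1_{t ≥ 0}`. -/
def rayleighCDF (t : ℝ) : ℝ := if 0 ≤ t then 1 - Real.exp (-t ^ 2 / 2) else 0

/-!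
Both sides depend only on the first `n` marks. The ancestors of a particle `v` determine whether
`v` is alive and the marks along its line of descent, and the offspring data of `v` is independent
of theirs and distributed like that of the root. Hence summing over the children of the particles
of generation `n` multiplies by `𝔼N` and integrates one more mark against `μ`, and by induction
`𝔼 Σ_{|u|=n} F(g_{u|1}, …, g_u) = (𝔼N)ⁿ ∫ F dμ^{⊗n}`, first for `F ≥ 0` and then, splitting into
positive and negative parts, for integrable `F`. Under `Q_s^x` the weight `r_s(X_n)⁻¹ e^{-s S_n}`
cancels the density `κ(s)^{-n} e^{s σ(G_n,x)} r_s(G_n·x) / r_s(x)` of the `n`-marginal with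
respect to `μ^{⊗n}`, so the right-hand side is also `(𝔼N)ⁿ` times the integral of `h` along the
path against `μ^{⊗n}`.
-/

instance : SecondCountableTopology (GLV d) :=
  Units.isEmbedding_embedProduct.toIsInducing.secondCountableTopology

lemma apply_ne_zero (g : GLV d) {v : V d} (hv : v ≠ 0) : (g : V d →L[ℝ] V d) v ≠ 0 :=
  fun h => hv (unit_injective g (by simpa using h))

lemma gact_mk (g : GLV d) {v : V d} (hv : v ≠ 0) :
    gact g (Projectivization.mk ℝ v hv) =
      Projectivization.mk ℝ ((g : V d →L[ℝ] V d) v) (apply_ne_zero g hv) :=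
  Projectivization.map_mk _ _ _ _

lemma cocycle_mk (g : GLV d) {v : V d} (hv : v ≠ 0) :
    cocycle g (Projectivization.mk ℝ v hv) = Real.log (‖(g : V d →L[ℝ] V d) v‖ / ‖v‖) := by
  obtain ⟨a, ha⟩ := Projectivization.exists_smul_eq_mk_rep ℝ v hv
  rw [cocycle, ← ha, Units.smul_def, map_smul, norm_smul, norm_smul,
    mul_div_mul_left _ _ (by simp)]

lemma cocycle_one (x : PV d) : cocycle (1 : GLV d) x = 0 := by
  simp [cocycle, div_self (norm_ne_zero_iff.2 x.rep_nonzero)]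

lemma cocycle_mul (g p : GLV d) (x : PV d) :
    cocycle (g * p) x = cocycle g (gact p x) + cocycle p x := by
  have hv := x.rep_nonzero
  have hpv := apply_ne_zero p hv
  have hgpv := apply_ne_zero g hpv
  rw [← x.mk_rep, gact_mk, cocycle_mk, cocycle_mk, cocycle_mk, Units.val_mul,
    mul_apply_eq_comp, Real.log_div (norm_ne_zero_iff.2 hgpv) (norm_ne_zero_iff.2 hv),
    Real.log_div (norm_ne_zero_iff.2 hgpv) (norm_ne_zero_iff.2 hpv),
    Real.log_div (norm_ne_zero_iff.2 hpv) (norm_ne_zero_iff.2 hv)]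
  ring

lemma continuous_apply_rep (x : PV d) :
    Continuous fun g : GLV d => (g : V d →L[ℝ] V d) x.rep :=
  (ContinuousLinearMap.apply ℝ (V d) x.rep).continuous.comp Units.continuous_val

lemma continuous_gact_right (x : PV d) : Continuous fun g : GLV d => gact g x := by
  have hgact : (fun g : GLV d => gact g x) = fun g : GLV d =>
      Projectivization.mk ℝ ((g : V d →L[ℝ] V d) x.rep) (apply_ne_zero g x.rep_nonzero) :=
    funext fun g => by conv_lhs => rw [← x.mk_rep, gact_mk]
  rw [hgact]
  exact continuous_quotient_mk'.comp ((continuous_apply_rep x).subtype_mk _)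

lemma measurable_cocycle_right (x : PV d) : Measurable fun g : GLV d => cocycle g x :=
  Real.measurable_log.comp ((continuous_apply_rep x).norm.div_const _).measurable

lemma prodTup_succ {m : ℕ} (gs : Fin (m + 1) → GLV d) :
    prodTup gs = gs (Fin.last m) * prodTup (fun i => gs i.castSucc) := by
  rw [prodTup, List.ofFn_succ', List.concat_eq_append, List.reverse_append]
  simp [prodTup]

lemma measurable_prodTup (m : ℕ) : Measurable (prodTup : (Fin m → GLV d) → GLV d) := by
  induction m with
  | zero =>
    rw [show (prodTup : (Fin 0 → GLV d) → GLV d) = fun _ => 1 from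
      funext fun _ => by simp [prodTup]]
    exact measurable_const
  | succ m ih =>
    simp only [funext prodTup_succ]
    exact (measurable_pi_apply _).mul
      (ih.comp (measurable_pi_lambda _ fun i => measurable_pi_apply _))

lemma prodPath_eq_prodTup (ω : ℕ → GLV d) (m : ℕ) :
    prodPath ω m = prodTup (fun i : Fin m => ω i) := by
  induction m with
  | zero => simp [prodPath, prodTup]
  | succ m ih => rw [prodPath, ih, prodTup_succ]; rfl

lemma Sc_eq_cocycle_prodPath (x : PV d) (ω : ℕ → GLV d) (m : ℕ) :
    Sc x ω m = cocycle (prodPath ω m) x := by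
  induction m with
  | zero => simp [Sc, prodPath, cocycle_one]
  | succ m ih => rw [Sc, ih, prodPath, cocycle_mul, Xc, add_comm]

lemma sum_range_eq_tsum_ite {α : Type*} [AddCommMonoid α] [TopologicalSpace α] (N : ℕ)
    (g : ℕ → α) : ∑ i ∈ Finset.range N, g i = ∑' i, if i < N then g i else 0 := by
  rw [tsum_eq_sum (s := Finset.range N) fun i hi => if_neg (by simpa using hi)]
  exact Finset.sum_congr rfl fun i hi => (if_pos (Finset.mem_range.mp hi)).symm

lemma measurable_sum_range {α β : Type*} [MeasurableSpace α] [MeasurableSpace β]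
    [AddCommMonoid β] [MeasurableAdd₂ β] {N : α → ℕ} (hN : Measurable N) {g : ℕ → α → β}
    (hg : ∀ i, Measurable (g i)) : Measurable fun a => ∑ i ∈ Finset.range (N a), g i a :=
  (measurable_from_prod_countable_left (f := fun p : α × ℕ => ∑ i ∈ Finset.range p.2, g i p.1)
    fun k => Finset.measurable_sum (Finset.range k) fun i _ => hg i).comp (measurable_id.prodMk hN)

lemma snoc_comp_take_succ {α : Type*} (g : List ℕ → α) {n : ℕ} {v : List ℕ}
    (hv : v.length = n) (i : ℕ) :
    Fin.snoc (fun k : Fin n => g (v.take (k + 1))) (g (v ++ [i])) =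
      fun k : Fin (n + 1) => g ((v ++ [i]).take (k + 1)) := by
  funext k
  refine Fin.lastCases ?_ (fun j => ?_) k
  · simp [List.take_of_length_le, hv]
  · simp [List.take_append_of_le_length, hv, Nat.succ_le_of_lt j.isLt]

lemma measurable_snoc {α : Type*} [MeasurableSpace α] {n : ℕ} :
    Measurable fun p : (Fin n → α) × α => (Fin.snoc p.1 p.2 : Fin (n + 1) → α) := by
  refine measurable_pi_lambda _ fun j => Fin.lastCases ?_ (fun k => ?_) j
  · simp only [Fin.snoc_last]
    exact measurable_snd
  · simp only [Fin.snoc_castSucc]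
    exact (measurable_pi_apply k).comp measurable_fst

lemma lintegral_pi_snoc {α : Type*} [MeasurableSpace α] {μ : Measure α} [SigmaFinite μ]
    {n : ℕ} {F : (Fin (n + 1) → α) → ℝ≥0∞} (hF : Measurable F) :
    ∫⁻ gs, F gs ∂(Measure.pi fun _ => μ) =
      ∫⁻ gs, ∫⁻ g, F (Fin.snoc gs g) ∂μ ∂(Measure.pi fun _ => μ) := by
  set e := MeasurableEquiv.piFinSuccAbove (fun _ : Fin (n + 1) => α) (Fin.last n)
  have he := (measurePreserving_piFinSuccAbove (fun _ : Fin (n + 1) => μ) (Fin.last n)).symm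
  rw [← he.lintegral_comp hF,
    lintegral_prod_symm (fun p => F (e.symm p)) (hF.comp e.symm.measurable).aemeasurable]
  exact lintegral_congr fun gs => lintegral_congr fun g => congrArg F (Fin.insertNth_last' g gs)

theorem _root_.ProbabilityTheory.IndepFun.lintegral_comp_eq_lintegral_lintegral
    {Ω α β : Type*} [MeasurableSpace Ω] [MeasurableSpace α] [MeasurableSpace β]
    {P : Measure Ω} [IsFiniteMeasure P] {T : Ω → α} {Y : Ω → β} (hTY : IndepFun T Y P)
    (hT : Measurable T) (hY : Measurable Y) {ψ : α × β → ℝ≥0∞} (hψ : Measurable ψ) :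
    ∫⁻ ω, ψ (T ω, Y ω) ∂P = ∫⁻ ω, ∫⁻ ω', ψ (T ω, Y ω') ∂P ∂P := by
  rw [← lintegral_map hψ (hT.prodMk hY),
    (indepFun_iff_map_prod_eq_prod_map_map hT.aemeasurable hY.aemeasurable).mp hTY,
    lintegral_prod _ hψ.aemeasurable, lintegral_map hψ.lintegral_prod_right' hT]
  exact lintegral_congr fun ω => lintegral_map (hψ.comp measurable_prodMk_left) hY

lemma tsum_eq_toReal_sub_toReal {ι : Type*} (f : ι → ℝ) (hpos : ∑' i, ENNReal.ofReal (f i) ≠ ⊤)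
    (hneg : ∑' i, ENNReal.ofReal (-f i) ≠ ⊤) :
    ∑' i, f i = (∑' i, ENNReal.ofReal (f i)).toReal - (∑' i, ENNReal.ofReal (-f i)).toReal := by
  rw [ENNReal.tsum_toReal_eq fun _ => ENNReal.ofReal_ne_top,
    ENNReal.tsum_toReal_eq fun _ => ENNReal.ofReal_ne_top,
    ← (ENNReal.summable_toReal hpos).tsum_sub (ENNReal.summable_toReal hneg)]
  simp only [ENNReal.toReal_ofReal', max_zero_sub_max_neg_zero_eq_self]

lemma integral_tsum_eq_toReal_sub_toReal {α ι : Type*} [MeasurableSpace α] [Countable ι]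
    {P : Measure α} {f : ι → α → ℝ} (hf : ∀ i, Measurable (f i))
    (hpos : ∫⁻ a, ∑' i, ENNReal.ofReal (f i a) ∂P ≠ ⊤)
    (hneg : ∫⁻ a, ∑' i, ENNReal.ofReal (-f i a) ∂P ≠ ⊤) :
    ∫ a, ∑' i, f i a ∂P =
      (∫⁻ a, ∑' i, ENNReal.ofReal (f i a) ∂P).toReal -
        (∫⁻ a, ∑' i, ENNReal.ofReal (-f i a) ∂P).toReal := by
  have hmp : Measurable fun a => ∑' i, ENNReal.ofReal (f i a) :=
    Measurable.tsum fun i => (hf i).ennreal_ofReal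
  have hmn : Measurable fun a => ∑' i, ENNReal.ofReal (-f i a) :=
    Measurable.tsum fun i => (hf i).neg.ennreal_ofReal
  have hae : ∀ᵐ a ∂P, ∑' i, f i a = (∑' i, ENNReal.ofReal (f i a)).toReal -
      (∑' i, ENNReal.ofReal (-f i a)).toReal := by
    filter_upwards [ae_lt_top hmp hpos, ae_lt_top hmn hneg] with a hp hn
    exact tsum_eq_toReal_sub_toReal _ hp.ne hn.ne
  rw [integral_congr_ae hae,
    integral_sub (integrable_toReal_of_lintegral_ne_top hmp.aemeasurable hpos)
      (integrable_toReal_of_lintegral_ne_top hmn.aemeasurable hneg),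
    integral_toReal hmp.aemeasurable (ae_lt_top hmp hpos),
    integral_toReal hmn.aemeasurable (ae_lt_top hmn hneg)]

namespace BRW

variable {Ω : Type*} [MeasurableSpace Ω] (b : BRW d Ω) {μ : Measure (GLV d)}

lemma Gu_take_eq_prodTup (u : List ℕ) (ω : Ω) {k : ℕ} (hk : k + 1 ≤ u.length) :
    b.Gu (u.take (k + 1)) ω = prodTup (fun j : Fin (k + 1) => b.mark (u.take (j + 1)) ω) := by
  unfold BRW.Gu prodTup
  congr 2
  apply List.ext_getElem (by simp [hk])
  intro i h1 _
  simp only [List.getElem_map, List.getElem_range, List.getElem_ofFn, List.take_take]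
  congr 2
  simp at h1
  omega

def nodeData (u : List ℕ) (ω : Ω) : ℕ × (ℕ → GLV d) :=
  (b.Noff u ω, fun i => b.mark (u ++ [i]) ω)

lemma measurable_nodeData (u : List ℕ) : Measurable (b.nodeData u) :=
  (b.measN u).prodMk (measurable_pi_lambda _ fun _ => b.measMark _)

lemma measurableSet_alive (u : List ℕ) : MeasurableSet {ω | b.alive u ω} := by
  simp only [alive, Set.ofPred_forall]
  exact MeasurableSet.iInter fun k => b.measN _ MeasurableSet.of_discrete

lemma measurableSet_length_alive (u : List ℕ) (n : ℕ) :
    MeasurableSet {ω | u.length = n ∧ b.alive u ω} :=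
  (MeasurableSet.const _).inter (b.measurableSet_alive u)

lemma alive_append_singleton (v : List ℕ) (i : ℕ) (ω : Ω) :
    b.alive (v ++ [i]) ω ↔ b.alive v ω ∧ i < b.Noff v ω := by
  constructor
  · intro h
    refine ⟨fun k => ?_, ?_⟩
    · simpa [List.getElem_append_left, List.take_append_of_le_length k.isLt.le]
        using h ⟨k, by simp⟩
    · simpa using h ⟨v.length, by simp⟩
  · rintro ⟨hv, hi⟩ ⟨k, hk⟩
    rcases (show k < v.length ∨ k = v.length by simp at hk; omega) with hk' | rfl
    · simpa [List.getElem_append_left hk', List.take_append_of_le_length hk'.le]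
        using hv ⟨k, hk'⟩
    · simpa using hi

lemma measurable_ite_length_alive {β : Type*} [Zero β] [MeasurableSpace β] (u : List ℕ) (n : ℕ)
    {Φ : Ω → β} (hΦ : Measurable Φ) :
    Measurable fun ω => if u.length = n ∧ b.alive u ω then Φ ω else 0 :=
  Measurable.ite (b.measurableSet_length_alive u n) hΦ measurable_const

lemma measurable_mark_take (u : List ℕ) (n : ℕ) :
    Measurable fun ω (k : Fin n) => b.mark (u.take (k + 1)) ω :=
  measurable_pi_lambda _ fun _ => b.measMark _

lemma tsum_ite_alive_zero (ω : Ω) (F : (Fin 0 → GLV d) → ℝ≥0∞) :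
    ∑' u : List ℕ, (if u.length = 0 ∧ b.alive u ω then
      F (fun k : Fin 0 => b.mark (u.take (k + 1)) ω) else 0) = F finZeroElim := by
  rw [tsum_eq_single []]
  · simp [alive, Subsingleton.elim _ (finZeroElim : Fin 0 → GLV d)]
  · intro u hu
    simp [hu]

lemma tsum_ite_alive_succ (n : ℕ) (ω : Ω) (F : (Fin (n + 1) → GLV d) → ℝ≥0∞) :
    ∑' u : List ℕ, (if u.length = n + 1 ∧ b.alive u ω then
      F (fun k : Fin (n + 1) => b.mark (u.take (k + 1)) ω) else 0) =
      ∑' v : List ℕ, if v.length = n ∧ b.alive v ω then ∑ i ∈ Finset.range (b.Noff v ω),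
        F (Fin.snoc (fun k : Fin n => b.mark (v.take (k + 1)) ω) (b.mark (v ++ [i]) ω)) else 0 := by
  have hinj : Function.Injective fun p : List ℕ × ℕ => p.1 ++ [p.2] := fun p q h =>
    Prod.ext (by simpa using congrArg List.dropLast h) (by simpa using congrArg List.getLast? h)
  have hsupp : Function.support (fun u : List ℕ => if u.length = n + 1 ∧ b.alive u ω then
      F (fun k : Fin (n + 1) => b.mark (u.take (k + 1)) ω) else 0) ⊆
      Set.range fun p : List ℕ × ℕ => p.1 ++ [p.2] := by
    intro u hu
    have hne : u ≠ [] := by rintro rfl; simp at hu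
    exact ⟨(u.dropLast, u.getLast hne), List.dropLast_append_getLast hne⟩
  rw [← hinj.tsum_eq hsupp, ENNReal.tsum_prod']
  refine tsum_congr fun v => ?_
  by_cases hv : v.length = n ∧ b.alive v ω
  · rw [if_pos hv, sum_range_eq_tsum_ite]
    exact tsum_congr fun i => by
      simp [alive_append_singleton, hv, snoc_comp_take_succ (b.mark · ω) hv.1]
  · rw [if_neg hv]
    refine (tsum_congr fun i => if_neg ?_).trans tsum_zero
    rintro ⟨hl, ha⟩
    exact hv ⟨by simpa using hl, ((b.alive_append_singleton v i ω).1 ha).1⟩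

lemma IsBRWLaw.lintegral_sum_mark_nil (hlaw : b.IsBRWLaw μ) {f : GLV d → ℝ≥0∞}
    (hf : Measurable f) :
    ∫⁻ ω, ∑ i ∈ Finset.range (b.Noff [] ω), f (b.mark [i] ω) ∂b.PP =
      ENNReal.ofReal b.EN * ∫⁻ g, f g ∂μ := by
  have hsum : ∀ {f : GLV d → ℝ≥0∞}, Measurable f →
      Measurable fun ω => ∑ i ∈ Finset.range (b.Noff [] ω), f (b.mark [i] ω) :=
    fun hf => measurable_sum_range (b.measN []) fun i => hf.comp (b.measMark [i])
  refine Measurable.ennreal_induction (motive := fun f =>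
    ∫⁻ ω, ∑ i ∈ Finset.range (b.Noff [] ω), f (b.mark [i] ω) ∂b.PP =
      ENNReal.ofReal b.EN * ∫⁻ g, f g ∂μ) ?_ ?_ ?_ hf
  · intro c s hs
    have hc : ∀ y, s.indicator (fun _ => c) y = c * s.indicator (fun _ => (1 : ℝ≥0∞)) y :=
      fun y => by by_cases hy : y ∈ s <;> simp [hy]
    simp only [hc, ← Finset.mul_sum]
    rw [lintegral_const_mul _ (hsum (measurable_const.indicator hs)), ← hlaw s hs,
      lintegral_const_mul _ (measurable_const.indicator hs), lintegral_indicator_const hs]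
    ring
  · intro f g _ hf hg hPf hPg
    simp only [Pi.add_apply, Finset.sum_add_distrib]
    rw [lintegral_add_left (hsum hf), hPf, hPg, lintegral_add_left hf, mul_add]
  · intro f hf hmono hPf
    have hsup : ∀ ω, ∑ i ∈ Finset.range (b.Noff [] ω), ⨆ n, f n (b.mark [i] ω) =
        ⨆ n, ∑ i ∈ Finset.range (b.Noff [] ω), f n (b.mark [i] ω) := fun ω =>
      ENNReal.finsetSum_iSup_of_monotone fun i _ _ hmn => hmono hmn _
    simp only [hsup]
    rw [lintegral_iSup (fun n => hsum (hf n))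
      (fun _ _ hmn ω => Finset.sum_le_sum fun i _ => hmono hmn _)]
    simp only [hPf]
    rw [lintegral_iSup hf hmono, ENNReal.mul_iSup]

lemma IsBRWLaw.lintegral_sum_mark (hlaw : b.IsBRWLaw μ) (v : List ℕ) {f : GLV d → ℝ≥0∞}
    (hf : Measurable f) :
    ∫⁻ ω, ∑ i ∈ Finset.range (b.Noff v ω), f (b.mark (v ++ [i]) ω) ∂b.PP =
      ENNReal.ofReal b.EN * ∫⁻ g, f g ∂μ := by
  have hφ : Measurable fun y : ℕ × (ℕ → GLV d) => ∑ i ∈ Finset.range y.1, f (y.2 i) :=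
    measurable_sum_range measurable_fst fun i =>
      hf.comp ((measurable_pi_apply i).comp measurable_snd)
  rw [← hlaw.lintegral_sum_mark_nil b hf]
  exact ((b.ident v []).comp hφ).lintegral_eq

def ancestorData (v : List ℕ) (ω : Ω) : Fin v.length → ℕ × (ℕ → GLV d) :=
  fun j => b.nodeData (v.take j) ω

lemma measurable_ancestorData (v : List ℕ) : Measurable (b.ancestorData v) :=
  measurable_pi_lambda _ fun _ => b.measurable_nodeData _

lemma mark_take_succ (v : List ℕ) (k : Fin v.length) (ω : Ω) :
    b.mark (v.take (k + 1)) ω = (b.ancestorData v ω k).2 (v.get k) := by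
  simp only [ancestorData, nodeData, List.take_add_one, List.getElem?_eq_getElem k.isLt]
  rfl

lemma indepFun_ancestorData_nodeData (v : List ℕ) :
    IndepFun (b.ancestorData v) (b.nodeData v) b.PP := by
  have hv : v ∉ Finset.univ.image fun j : Fin v.length => v.take j := by
    simp only [Finset.mem_image, Finset.mem_univ, true_and, not_exists]
    intro j hj
    have := congrArg List.length hj
    simp at this
    omega
  exact (b.indep.indepFun_finset _ {v} (Finset.disjoint_singleton_right.mpr hv)
    b.measurable_nodeData).comp
    (measurable_pi_lambda _ fun j : Fin v.length =>
      measurable_pi_apply ⟨v.take j, Finset.mem_image_of_mem _ (Finset.mem_univ j)⟩)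
    (measurable_pi_apply ⟨v, Finset.mem_singleton_self v⟩)

lemma IsBRWLaw.lintegral_ite_alive_sum_mark (hlaw : b.IsBRWLaw μ) (v : List ℕ)
    {F : (Fin v.length → GLV d) → GLV d → ℝ≥0∞} (hF : Measurable (Function.uncurry F)) :
    ∫⁻ ω, (if b.alive v ω then ∑ i ∈ Finset.range (b.Noff v ω),
        F (fun k => b.mark (v.take (k + 1)) ω) (b.mark (v ++ [i]) ω) else 0) ∂b.PP =
      ENNReal.ofReal b.EN * ∫⁻ ω, (if b.alive v ω then
        ∫⁻ g, F (fun k => b.mark (v.take (k + 1)) ω) g ∂μ else 0) ∂b.PP := by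
  have := b.prob
  let T := b.ancestorData v
  let γ : (Fin v.length → ℕ × (ℕ → GLV d)) → Fin v.length → GLV d := fun t k => (t k).2 (v.get k)
  let ψ : (Fin v.length → ℕ × (ℕ → GLV d)) × (ℕ × (ℕ → GLV d)) → ℝ≥0∞ := fun p =>
    if ∀ j, v.get j < (p.1 j).1 then ∑ i ∈ Finset.range p.2.1, F (γ p.1) (p.2.2 i) else 0
  have hγT : ∀ ω, γ (T ω) = fun k : Fin v.length => b.mark (v.take (k + 1)) ω :=
    fun ω => funext fun k => (b.mark_take_succ v k ω).symm
  have hA : MeasurableSet {t : Fin v.length → ℕ × (ℕ → GLV d) | ∀ j, v.get j < (t j).1} := by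
    simp only [Set.ofPred_forall]
    exact MeasurableSet.iInter fun j =>
      (measurable_fst.comp (measurable_pi_apply j)) MeasurableSet.of_discrete
  have hγ : Measurable γ := measurable_pi_lambda _ fun k =>
    (measurable_pi_apply _).comp (measurable_snd.comp (measurable_pi_apply k))
  have hψ : Measurable ψ := Measurable.ite (measurable_fst hA)
    (measurable_sum_range (measurable_fst.comp measurable_snd) fun i =>
      hF.comp ((hγ.comp measurable_fst).prodMk
        ((measurable_pi_apply i).comp (measurable_snd.comp measurable_snd))))
    measurable_const
  calc _ = ∫⁻ ω, ψ (T ω, b.nodeData v ω) ∂b.PP := by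
        refine lintegral_congr fun ω => ?_
        simp only [ψ, hγT]
        -- the two conditions agree up to their `Decidable` instances
        exact if_congr Iff.rfl rfl rfl
    _ = ∫⁻ ω, ∫⁻ ω', ψ (T ω, b.nodeData v ω') ∂b.PP ∂b.PP :=
        (b.indepFun_ancestorData_nodeData v).lintegral_comp_eq_lintegral_lintegral
          (b.measurable_ancestorData v) (b.measurable_nodeData v) hψ
    _ = ∫⁻ ω, ENNReal.ofReal b.EN * (if b.alive v ω then
          ∫⁻ g, F (fun k => b.mark (v.take (k + 1)) ω) g ∂μ else 0) ∂b.PP := by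
        refine lintegral_congr fun ω => ?_
        by_cases hω : b.alive v ω
        · have hTA : ∀ j, v.get j < (T ω j).1 := hω
          simp only [ψ, if_pos hTA, if_pos hω, hγT]
          exact hlaw.lintegral_sum_mark b v (hF.comp measurable_prodMk_left :
            Measurable (F fun k : Fin v.length => b.mark (v.take (k + 1)) ω))
        · have hTA : ¬∀ j, v.get j < (T ω j).1 := hω
          simp only [ψ, if_neg hTA, if_neg hω, lintegral_zero, mul_zero]
    _ = _ := lintegral_const_mul' _ _ ENNReal.ofReal_ne_top

theorem IsBRWLaw.lintegral_tsum_generation (hlaw : b.IsBRWLaw μ) [SigmaFinite μ] (n : ℕ)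
    {F : (Fin n → GLV d) → ℝ≥0∞} (hF : Measurable F) :
    ∫⁻ ω, ∑' u : List ℕ, (if u.length = n ∧ b.alive u ω then
        F (fun k : Fin n => b.mark (u.take (k + 1)) ω) else 0) ∂b.PP =
      ENNReal.ofReal b.EN ^ n * ∫⁻ gs, F gs ∂(Measure.pi fun _ => μ) := by
  have := b.prob
  induction n with
  | zero =>
    simp only [b.tsum_ite_alive_zero, lintegral_const, measure_univ,
      Measure.pi_of_empty _ finZeroElim, lintegral_dirac' _ hF]
    simp
  | succ n ih =>
    have hF' : Measurable fun p : (Fin n → GLV d) × GLV d => F (Fin.snoc p.1 p.2) :=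
      hF.comp measurable_snoc
    have hG : Measurable fun gs => ∫⁻ g, F (Fin.snoc gs g) ∂μ := hF'.lintegral_prod_right'
    calc _ = ∑' v : List ℕ, ∫⁻ ω, (if v.length = n ∧ b.alive v ω then
          ∑ i ∈ Finset.range (b.Noff v ω),
            F (Fin.snoc (fun k : Fin n => b.mark (v.take (k + 1)) ω) (b.mark (v ++ [i]) ω))
          else 0) ∂b.PP := by
          simp only [b.tsum_ite_alive_succ]
          exact lintegral_tsum fun v => (b.measurable_ite_length_alive v n
            (measurable_sum_range (b.measN v) fun i =>
              hF'.comp ((b.measurable_mark_take v n).prodMk (b.measMark _)))).aemeasurable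
      _ = ∑' v : List ℕ, ENNReal.ofReal b.EN * ∫⁻ ω, (if v.length = n ∧ b.alive v ω then
          ∫⁻ g, F (Fin.snoc (fun k : Fin n => b.mark (v.take (k + 1)) ω) g) ∂μ else 0) ∂b.PP := by
          refine tsum_congr fun v => ?_
          by_cases hv : v.length = n
          · subst hv
            simpa using
              hlaw.lintegral_ite_alive_sum_mark b v (F := fun gs g => F (Fin.snoc gs g)) hF'
          · simp [hv]
      _ = ENNReal.ofReal b.EN ^ (n + 1) * ∫⁻ gs, F gs ∂(Measure.pi fun _ => μ) := by
          rw [ENNReal.tsum_mul_left, ← lintegral_tsum fun v => (b.measurable_ite_length_alive v n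
            (Φ := fun ω => ∫⁻ g, F (Fin.snoc (fun k : Fin n => b.mark (v.take (k + 1)) ω) g) ∂μ)
            (hG.comp (b.measurable_mark_take v n))).aemeasurable, ih hG, lintegral_pi_snoc hF,
            pow_succ]
          ring

lemma EN_nonneg : 0 ≤ b.EN := integral_nonneg fun _ => Nat.cast_nonneg _

theorem IsBRWLaw.integral_tsum_generation (hlaw : b.IsBRWLaw μ) [SigmaFinite μ] {n : ℕ}
    {F : (Fin n → GLV d) → ℝ} (hF : Measurable F) (hint : Integrable F (Measure.pi fun _ => μ)) :
    ∫ ω, ∑' u : List ℕ, (if u.length = n ∧ b.alive u ω then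
        F (fun k : Fin n => b.mark (u.take (k + 1)) ω) else 0) ∂b.PP =
      b.EN ^ n * ∫ gs, F gs ∂(Measure.pi fun _ => μ) := by
  have hlin : ∀ {G : (Fin n → GLV d) → ℝ}, Measurable G →
      ∫⁻ ω, ∑' u : List ℕ, ENNReal.ofReal (if u.length = n ∧ b.alive u ω then
        G (fun k : Fin n => b.mark (u.take (k + 1)) ω) else 0) ∂b.PP =
      ENNReal.ofReal b.EN ^ n * ∫⁻ gs, ENNReal.ofReal (G gs) ∂(Measure.pi fun _ => μ) :=
    fun hG => by
      simp only [apply_ite ENNReal.ofReal, ENNReal.ofReal_zero]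
      exact hlaw.lintegral_tsum_generation b n hG.ennreal_ofReal
  have hpos := hlin hF
  have hneg : ∫⁻ ω, ∑' u : List ℕ, ENNReal.ofReal (-if u.length = n ∧ b.alive u ω then
        F (fun k : Fin n => b.mark (u.take (k + 1)) ω) else 0) ∂b.PP =
      ENNReal.ofReal b.EN ^ n * ∫⁻ gs, ENNReal.ofReal (-F gs) ∂(Measure.pi fun _ => μ) := by
    simpa only [neg_ite, neg_zero, Pi.neg_apply] using hlin hF.neg
  rw [integral_tsum_eq_toReal_sub_toReal (f := fun u ω => if u.length = n ∧ b.alive u ω then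
      F (fun k : Fin n => b.mark (u.take (k + 1)) ω) else 0) (fun u =>
      b.measurable_ite_length_alive u n (hF.comp (b.measurable_mark_take u n)))
      (hpos ▸ ENNReal.mul_ne_top (by simp) hint.lintegral_lt_top.ne)
      (hneg ▸ ENNReal.mul_ne_top (by simp) hint.neg.lintegral_lt_top.ne),
    hpos, hneg, ENNReal.toReal_mul, ENNReal.toReal_mul, ENNReal.toReal_pow,
    ENNReal.toReal_ofReal b.EN_nonneg, integral_eq_lintegral_pos_part_sub_lintegral_neg_part hint,
    mul_sub]

end BRW

namespace ChangedMeasure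

variable {μ : Measure (GLV d)} {es : EigenSystem d μ} {s : ℝ} (cm : ChangedMeasure d μ es s)

lemma integral_comp_restrict (hs : s ∈ Iplus d μ ∪ Iminus d μ) (x : PV d) (n : ℕ)
    {Φ : (Fin n → GLV d) → ℝ} (hΦ : Measurable Φ) :
    ∫ ω, Φ (fun i : Fin n => ω i) ∂cm.Q x =
      ∫ gs, (es.κ s ^ n)⁻¹ * Real.exp (s * cocycle (prodTup gs) x) *
        (es.r s (gact (prodTup gs) x) / es.r s x) * Φ gs ∂(Measure.pi fun _ => μ) := by
  have hr := es.r_pos s hs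
  have hρ : Measurable fun gs : Fin n → GLV d => (es.κ s ^ n)⁻¹ *
      Real.exp (s * cocycle (prodTup gs) x) * (es.r s (gact (prodTup gs) x) / es.r s x) :=
    (measurable_const.mul (((measurable_cocycle_right x).comp
      (measurable_prodTup n)).const_mul s).exp).mul
      ((((es.r_cont s hs).comp (continuous_gact_right x)).measurable.comp
        (measurable_prodTup n)).div_const _)
  have hρ0 : ∀ gs : Fin n → GLV d, 0 ≤ (es.κ s ^ n)⁻¹ *
      Real.exp (s * cocycle (prodTup gs) x) * (es.r s (gact (prodTup gs) x) / es.r s x) :=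
    fun gs => mul_nonneg (mul_nonneg (inv_nonneg.2 (pow_nonneg (es.κ_pos s hs).le n))
      (Real.exp_pos _).le) (div_nonneg (hr _).le (hr x).le)
  rw [← integral_map (measurable_pi_lambda (fun (ω : ℕ → GLV d) (i : Fin n) => ω i)
      fun i => measurable_pi_apply _).aemeasurable
      hΦ.aestronglyMeasurable, cm.marg x n,
    integral_withDensity_eq_integral_toReal_smul hρ.ennreal_ofReal
      (ae_of_all _ fun _ => ENNReal.ofReal_lt_top)]
  simp only [ENNReal.toReal_ofReal (hρ0 _), smul_eq_mul]

theorem integral_inv_r_mul_exp_mul (hs : s ∈ Iplus d μ ∪ Iminus d μ) (x : PV d) (n : ℕ)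
    {H : (Fin n → GLV d) → ℝ} (hH : Measurable H) :
    ∫ ω, (es.r s (Xc x ω n))⁻¹ * Real.exp (-s * Sc x ω n) * H (fun i : Fin n => ω i) ∂cm.Q x =
      (es.κ s ^ n)⁻¹ * (es.r s x)⁻¹ * ∫ gs, H gs ∂(Measure.pi fun _ => μ) := by
  have hr := es.r_pos s hs
  have hκ := es.κ_pos s hs
  simp only [Xc, Sc_eq_cocycle_prodPath, prodPath_eq_prodTup]
  rw [cm.integral_comp_restrict hs x n (Φ := fun gs => (es.r s (gact (prodTup gs) x))⁻¹ *
      Real.exp (-s * cocycle (prodTup gs) x) * H gs)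
      (((((es.r_cont s hs).comp (continuous_gact_right x)).measurable.comp
        (measurable_prodTup n)).inv.mul (((measurable_cocycle_right x).comp
          (measurable_prodTup n)).const_mul (-s)).exp).mul hH),
    ← integral_const_mul]
  refine integral_congr_ae (ae_of_all _ fun gs => ?_)
  simp only [neg_mul, Real.exp_neg]
  field_simp [(hr _).ne', (hr x).ne', hκ.ne']

end ChangedMeasure

-- `pathFn x gs k = (G_{k+1} · x, σ(G_{k+1}, x))`, where `G_m = gs (m - 1) * ⋯ * gs 0`.
def pathFn (x : PV d) {n : ℕ} (gs : Fin n → GLV d) : Fin n → PV d × ℝ := fun k =>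
  (gact (prodTup fun j : Fin (k + 1) => gs (Fin.castLE k.isLt j)) x,
    cocycle (prodTup fun j : Fin (k + 1) => gs (Fin.castLE k.isLt j)) x)

lemma measurable_pathFn (x : PV d) (n : ℕ) :
    Measurable (pathFn x : (Fin n → GLV d) → Fin n → PV d × ℝ) := by
  refine measurable_pi_lambda _ fun k => ?_
  have hG : Measurable fun gs : Fin n → GLV d =>
      prodTup fun j : Fin (k + 1) => gs (Fin.castLE k.isLt j) :=
    (measurable_prodTup _).comp (measurable_pi_lambda _ fun j => measurable_pi_apply _)
  exact ((continuous_gact_right x).measurable.comp hG).prodMk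
    ((measurable_cocycle_right x).comp hG)

lemma pathFn_mark_take {Ω : Type*} [MeasurableSpace Ω] (b : BRW d Ω) (x : PV d) {n : ℕ}
    {u : List ℕ} (hu : u.length = n) (ω : Ω) :
    pathFn x (fun k : Fin n => b.mark (u.take (k + 1)) ω) =
      fun k : Fin n => (gact (b.Gu (u.take (k + 1)) ω) x, cocycle (b.Gu (u.take (k + 1)) ω) x) := by
  funext k
  rw [b.Gu_take_eq_prodTup u ω (by omega)]
  rfl

lemma pathFn_restrict (x : PV d) {n : ℕ} (ω : ℕ → GLV d) :
    pathFn x (fun i : Fin n => ω i) = fun k : Fin n => (Xc x ω (k + 1), Sc x ω (k + 1)) := by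
  funext k
  simp only [Xc, Sc_eq_cocycle_prodPath, prodPath_eq_prodTup]
  rfl

theorem many_to_one_formula_general
    (d : ℕ) (Ω : Type) [MeasurableSpace Ω]
    (b : BRW d Ω) (μ : Measure (GLV d)) (es : EigenSystem d μ)
    (hlaw : b.IsBRWLaw μ) (hA2 : CondA2 d μ)
    (s : ℝ) (hs : s ∈ Iplus d μ ∪ Iminus d μ)
    (cm : ChangedMeasure d μ es s)
    (x : PV d) (n : ℕ)
    (h : (Fin n → PV d × ℝ) → ℝ)
    (hmeas : Measurable h) (hbdd : ∃ C : ℝ, ∀ z, |h z| ≤ C) :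
    ∫ ω, (∑' u : List ℕ,
        if u.length = n ∧ b.alive u ω then
          h (fun k : Fin n => (gact (b.Gu (u.take (k + 1)) ω) x,
            cocycle (b.Gu (u.take (k + 1)) ω) x))
        else 0) ∂b.PP
      = es.r s x * (es.κ s * b.EN) ^ n *
          ∫ ω, (es.r s (Xc x ω n))⁻¹ * Real.exp (-s * Sc x ω n) *
            h (fun k : Fin n => (Xc x ω (k + 1), Sc x ω (k + 1))) ∂cm.Q x := by
  have := hA2.isProb
  obtain ⟨C, hC⟩ := hbdd
  have hH : Measurable fun gs => h (pathFn x gs) := hmeas.comp (measurable_pathFn x n)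
  have hint : Integrable (fun gs => h (pathFn x gs)) (Measure.pi fun _ => μ) :=
    (integrable_const C).mono' hH.aestronglyMeasurable (ae_of_all _ fun _ => hC _)
  calc _ = b.EN ^ n * ∫ gs, h (pathFn x gs) ∂(Measure.pi fun _ => μ) := by
        rw [← hlaw.integral_tsum_generation b hH hint]
        refine integral_congr_ae (ae_of_all _ fun ω => tsum_congr fun u => ?_)
        split_ifs with hu
        · rw [pathFn_mark_take b x hu.1]
        · rfl
    _ = _ := by
        simp only [← pathFn_restrict]
        rw [cm.integral_inv_r_mul_exp_mul hs x n hH]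
        field_simp [(es.r_pos s hs x).ne', (es.κ_pos s hs).ne']
        ring

/-- the many-to-one formula, Lemma 3.1 of the paper. Under condition A2,
for every `s ∈ I_μ⁺ ∪ I_μ⁻`, `x ∈ ℙ(V)`, `n ≥ 1` and every bounded measurable
`h : (ℙ(V) × ℝ)^n → ℝ`,
`𝔼[Σ_{|u|=n} h(X^x_{u|1}, S^x_{u|1}, …, X^x_u, S^x_u)]
  = r_s(x) 𝔪(s)^n 𝔼_{Q_s^x}[r_s(X_n)⁻¹ e^{-s S_n} h(X_1, S_1, …, X_n, S_n)]`,
where `X^x_u = G_u · x`, `S^x_u = σ(G_u, x)` and `𝔪(s) = κ(s) 𝔼N`. -/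
theorem many_to_one_formula
    (d : ℕ) (hd : 0 < d) (Ω : Type) [MeasurableSpace Ω]
    (b : BRW d Ω) (μ : Measure (GLV d)) (es : EigenSystem d μ)
    (hlaw : b.IsBRWLaw μ) (hA2 : CondA2 d μ)
    (s : ℝ) (hs : s ∈ Iplus d μ ∪ Iminus d μ)
    (cm : ChangedMeasure d μ es s)
    (x : PV d) (n : ℕ) (hn : 1 ≤ n)
    (h : (Fin n → PV d × ℝ) → ℝ)
    (hmeas : Measurable h) (hbdd : ∃ C : ℝ, ∀ z, |h z| ≤ C) :
    ∫ ω, (∑' u : List ℕ,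
        if u.length = n ∧ b.alive u ω then
          h (fun k : Fin n => (gact (b.Gu (u.take (k + 1)) ω) x,
            cocycle (b.Gu (u.take (k + 1)) ω) x))
        else 0) ∂b.PP
      = es.r s x * (es.κ s * b.EN) ^ n *
          ∫ ω, (es.r s (Xc x ω n))⁻¹ * Real.exp (-s * Sc x ω n) *
            h (fun k : Fin n => (Xc x ω (k + 1), Sc x ω (k + 1))) ∂cm.Q x :=
  many_to_one_formula_general d Ω b μ es hlaw hA2 s hs cm x n h hmeas hbdd

end BRWGL
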